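/- Let S be a commutative noetherian ring and let R be a localization of S with respect to a multiplicatively closed subset of S. Then fdd(S) ≤ fdd(R). -/

import Mathlib

/-!
Localization at `W` is exact, so it carries a coresolution `0 → S → I⁰ → ⋯ → Iⁿ⁻¹` by flat
injective `S`-modules to a coresolution `0 → R → W⁻¹I⁰ → ⋯ → W⁻¹Iⁿ⁻¹`. Flatness is preserved by
any localization, and since `S` is noetherian, so is injectivity (Baer's criterion only involves
finitely presented ideals, and `Hom` out of those commutes with localization).
-/

universe u

/-- `fddGE R n M` holds iff there is an exact sequence
`0 → M → I^0 → ⋯ → I^(n-1)` of `R`-modules in which every `I^j` is both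
flat and injective; i.e. the flat-dominant dimension of `M` is at least `n`. -/
def fddGE (R : Type u) [CommRing R] :
    ℕ → (M : Type u) → [AddCommGroup M] → [Module R M] → Prop
  | 0, _, _, _ => True
  | (n+1), M, iM, mM =>
      letI := iM; letI := mM
      ∃ (I : Type u) (_ : AddCommGroup I) (_ : Module R I),
        Module.Flat R I ∧ Module.Injective R I ∧
        ∃ f : M →ₗ[R] I, Function.Injective f ∧ fddGE R n (I ⧸ LinearMap.range f)

section Localization

open scoped TensorProduct

variable {S : Type u} [CommRing S] [IsNoetherianRing S] (W : Submonoid S)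
  (R : Type u) [CommRing R] [Algebra S R] [IsLocalization W R]

theorem fddGE_of_isLocalizedModule (n : ℕ) {M M' : Type u} [AddCommGroup M] [Module S M]
    [AddCommGroup M'] [Module S M'] [Module R M'] [IsScalarTower S R M']
    (g : M →ₗ[S] M') [IsLocalizedModule W g] (hM : fddGE S n M) : fddGE R n M' := by
  induction n generalizing M M' with
  | zero => trivial
  | succ n ih =>
    obtain ⟨I, _, _, _, _, f, hf, hcoker⟩ := hM
    let ι : I →ₗ[S] R ⊗[S] I := TensorProduct.mk S R I 1
    have : IsLocalizedModule W ι :=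
      (isLocalizedModule_iff_isBaseChange W R ι).mpr (TensorProduct.isBaseChange S I R)
    let f' : M' →ₗ[R] R ⊗[S] I :=
      (IsLocalizedModule.map W g ι f).extendScalarsOfIsLocalization W R
    have hrange : LinearMap.range f' = (LinearMap.range f).localized' R W ι :=
      (LinearMap.localized'_range_eq_range_localizedMap R W g ι f).symm
    have hflat : Module.Flat R (R ⊗[S] I) := Module.Flat.of_isLocalizedModule R W ι
    have hinj : Module.Injective R (R ⊗[S] I) := Module.injective_of_isLocalizedModule W ι
    refine ⟨R ⊗[S] I, _, _, hflat, hinj, f', IsLocalizedModule.map_injective W g ι f hf, ?_⟩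
    rw [hrange]
    exact ih ((LinearMap.range f).toLocalizedQuotient' R W ι) hcoker

end Localization

theorem stmt17 (S : Type u) [CommRing S] [IsNoetherianRing S]
    (W : Submonoid S) (R : Type u) [CommRing R] [Algebra S R] [IsLocalization W R] :
    ∀ n : ℕ, fddGE S n S → fddGE R n R :=
  fun n => fddGE_of_isLocalizedModule W R n (Algebra.linearMap S R)
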